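/- Let ε > 0, δ > 0 and let L ≥ 2 be an integer with 2ε < δ ≤ 1/L. Suppose the true value v* is uniformly distributed on [0,1). Then the Bayesian private query complexity satisfies ⌈log(1/ε)⌉ ≤ N_B*(ε,δ,L) ≤ L·⌈log(1/(Lε))⌉ + L − 1. -/

import Mathlib

open Set

/-- A learner strategy of length `N` with seed space `Fin Y` (representing `{1,…,𝒴}`):
query functions mapping previous responses and the seed to a query in `[0,1)`,
and an estimation function mapping all responses and the seed to an estimate in `[0,1)`. -/
structure Strategy (N Y : ℕ) where
  query : (k : Fin N) → (Fin (k : ℕ) → Bool) → Fin Y → ℝ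
  estimate : (Fin N → Bool) → Fin Y → ℝ
  query_mem : ∀ k h y, query k h y ∈ Set.Ico (0 : ℝ) 1
  estimate_mem : ∀ r y, estimate r y ∈ Set.Ico (0 : ℝ) 1

namespace Strategy

variable {N Y : ℕ}

/-- The first `k` responses when the true value is `x` and the seed is `y`:
`r_k = 1` iff `x ≥ q_k`. -/
noncomputable def resps (φ : Strategy N Y) (x : ℝ) (y : Fin Y) : (k : ℕ) → Fin k → Bool
  | 0 => Fin.elim0
  | k + 1 => fun i =>
      if h : (i : ℕ) < k then resps φ x y k ⟨i, h⟩
      else if hk : k < N then decide (φ.query ⟨k, hk⟩ (resps φ x y k) y ≤ x)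
      else false

/-- The query sequence `q̄(x,y)`. -/
noncomputable def queries (φ : Strategy N Y) (x : ℝ) (y : Fin Y) : Fin N → ℝ :=
  fun k => φ.query k (resps φ x y (k : ℕ)) y

/-- The learner's estimate `x̂(x,y)`. -/
noncomputable def estim (φ : Strategy N Y) (x : ℝ) (y : Fin Y) : ℝ :=
  φ.estimate (resps φ x y N) y

/-- `Q(x)`: the set of query sequences that can arise when the true value is `x`. -/
def Q (φ : Strategy N Y) (x : ℝ) : Set (Fin N → ℝ) :=
  {q | ∃ y : Fin Y, φ.queries x y = q}

/-- The information set `I(q̄)` of the adversary. -/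
def infoSet (φ : Strategy N Y) (q : Fin N → ℝ) : Set ℝ :=
  {x | x ∈ Set.Ico (0 : ℝ) 1 ∧ q ∈ φ.Q x}

/-- The accuracy constraint with parameter `ε`. -/
def Accurate (ε : ℝ) (φ : Strategy N Y) : Prop :=
  ∀ x ∈ Set.Ico (0 : ℝ) 1, ∀ y : Fin Y, |φ.estim x y - x| ≤ ε / 2

end Strategy

/-- `E` is `(δ,L)`-coverable: `E` is contained in the union of `L` closed intervals
of length at most `δ` each. -/
def Coverable (δ : ℝ) (L : ℕ) (E : Set ℝ) : Prop :=
  ∃ a b : Fin L → ℝ, (∀ j, b j - a j ≤ δ) ∧ E ⊆ ⋃ j, Set.Icc (a j) (b j)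

/-- The `δ`-cover number `C_δ(E)`: the least positive `L` such that `E` is `(δ,L)`-coverable. -/
noncomputable def coverNumber (δ : ℝ) (E : Set ℝ) : ℕ :=
  sInf {L : ℕ | 0 < L ∧ Coverable δ L E}

/-- An `(ε,δ,L)`-private learner strategy. -/
def IsPrivate (ε δ : ℝ) (L : ℕ) {N Y : ℕ} (φ : Strategy N Y) : Prop :=
  φ.Accurate ε ∧ ∀ x ∈ Set.Ico (0 : ℝ) 1, ∀ q ∈ φ.Q x, L ≤ coverNumber δ (φ.infoSet q)

/-- `N*(ε,δ,L)`: the least length for which an `(ε,δ,L)`-private strategy exists. -/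
noncomputable def Nstar (ε δ : ℝ) (L : ℕ) : ℕ :=
  sInf {N : ℕ | ∃ Y : ℕ, 0 < Y ∧ ∃ φ : Strategy N Y, IsPrivate ε δ L φ}

open MeasureTheory ENNReal in
/-- Bayesian accuracy: with `v*` uniform on `[0,1)`, the estimate is within `ε/2` of the
true value with probability one (for each realization of the seed). -/
def BAccurate (ε : ℝ) {N Y : ℕ} (φ : Strategy N Y) : Prop :=
  ∀ y : Fin Y,
    volume {x | x ∈ Set.Ico (0 : ℝ) 1 ∧ ¬ |φ.estim x y - x| ≤ ε / 2} = 0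

open MeasureTheory ENNReal in
/-- An `(ε,δ,L)`-B-private strategy: Bayesian accuracy holds, and for every adversary
strategy — a kernel `ψ` assigning to each query sequence a Borel probability measure on
`[0,1)` — the probability (over `v*` uniform on `[0,1)`, the uniform seed `Y`, and the
adversary's randomization) that the adversary's estimate is within `δ/2` of `v*` is at
most `1/L`. -/
def BPrivate (ε δ : ℝ) (L : ℕ) {N Y : ℕ} (φ : Strategy N Y) : Prop :=
  BAccurate ε φ ∧
  ∀ ψ : (Fin N → ℝ) → Measure ℝ,
    (∀ q, IsProbabilityMeasure (ψ q)) → (∀ q, ψ q (Set.Ico (0 : ℝ) 1)ᶜ = 0) →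
    ∑ y : Fin Y, ∫⁻ x in Set.Ico (0 : ℝ) 1, ψ (φ.queries x y) {z | |z - x| ≤ δ / 2} ≤
      (Y : ℝ≥0∞) * ((L : ℝ≥0∞))⁻¹

/-- `N_B*(ε,δ,L)`: the least length for which an `(ε,δ,L)`-B-private strategy exists. -/
noncomputable def NBstar (ε δ : ℝ) (L : ℕ) : ℕ :=
  sInf {N : ℕ | ∃ Y : ℕ, 0 < Y ∧ ∃ φ : Strategy N Y, BPrivate ε δ L φ}


/-!
Lower bound: for a fixed seed the estimate takes at most `2 ^ N` values, and almost every point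
of `[0,1)` lies within `ε / 2` of one of them, so `2 ^ N * ε ≥ 1`.

Upper bound: cut `[0,1)` into `L` blocks of length `1 / L`. The first `L - 1` queries locate the
block of `v*`; then `m` rounds of bisection locate `v*` inside its block, each round probing the
same relative point in all `L` blocks, so that the learner reads only the response from its own
block. The query sequence therefore reveals only the relative dyadic cell of `v*`, a union of `L`
intervals of width `1 / (L * 2 ^ m)` spaced `1 / L` apart. An interval of length `δ ≤ 1 / L`
meets such a union in measure at most `1 / (L * 2 ^ m)`, so by Tonelli the adversary wins with
probability at most `2 ^ m / (L * 2 ^ m) = 1 / L`. Taking `2 ^ m ≥ 1 / (L * ε)` makes the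
midpoint estimate `ε / 2`-accurate.
-/

open MeasureTheory

theorem Nat.floor_two_mul {K : Type*} [Field K] [LinearOrder K] [IsStrictOrderedRing K]
    [FloorSemiring K] {v : K} (hv : 0 ≤ v) :
    ⌊2 * v⌋₊ = 2 * ⌊v⌋₊ + (decide ((2 * ⌊v⌋₊ + 1 : K) ≤ 2 * v)).toNat := by
  have h₁ := Nat.floor_le hv
  have h₂ := Nat.lt_floor_add_one v
  rw [Nat.floor_eq_iff (by positivity)]
  by_cases h : (2 * ⌊v⌋₊ + 1 : K) ≤ 2 * v <;> simp only [h, decide_true, decide_false,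
    Bool.toNat_true, Bool.toNat_false] <;> push_cast <;> constructor <;> linarith

theorem Nat.cast_floor_add_fract {R : Type*} [Ring R] [LinearOrder R] [IsStrictOrderedRing R]
    [FloorRing R] {a : R} (ha : 0 ≤ a) : (⌊a⌋₊ : R) + Int.fract a = a := by
  rw [natCast_floor_eq_intCast_floor ha, Int.floor_add_fract]

theorem Nat.floor_mul_natCast_lt {x : ℝ} {L : ℕ} (hL : 0 < L) (hx : x ∈ Ico (0 : ℝ) 1) :
    ⌊x * L⌋₊ < L := by
  rw [Nat.floor_lt (mul_nonneg hx.1 (Nat.cast_nonneg L))]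
  exact mul_lt_of_lt_one_left (by exact_mod_cast hL) hx.2

theorem ENNReal.ofReal_add_ofReal_le {a b c : ℝ} (ha : a ≤ c) (hb : b ≤ c)
    (hab : a + b ≤ c) :
    ENNReal.ofReal a + ENNReal.ofReal b ≤ ENNReal.ofReal c := by
  rcases le_total a 0 with ha₀ | ha₀
  · rw [ENNReal.ofReal_of_nonpos ha₀, zero_add]
    exact ENNReal.ofReal_le_ofReal hb
  rcases le_total b 0 with hb₀ | hb₀
  · rw [ENNReal.ofReal_of_nonpos hb₀, add_zero]
    exact ENNReal.ofReal_le_ofReal ha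
  rw [← ENNReal.ofReal_add ha₀ hb₀]
  exact ENNReal.ofReal_le_ofReal hab

theorem one_div_mul_two_pow_le_of_logb_le {a ε : ℝ} (ha : 0 < a) (hε : 0 < ε) {m : ℕ}
    (hm : Real.logb 2 (1 / (a * ε)) ≤ m) : 1 / (a * 2 ^ m) ≤ ε := by
  rw [Real.logb_le_iff_le_rpow one_lt_two (by positivity), Real.rpow_natCast,
    div_le_iff₀ (by positivity)] at hm
  rw [div_le_iff₀ (by positivity)]
  linarith

theorem one_le_card_mul_of_ae_near {ι : Type*} [Fintype ι] (e : ι → ℝ) {ε : ℝ}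
    (h : ∀ᵐ x, x ∈ Ico (0 : ℝ) 1 → ∃ i, |e i - x| ≤ ε / 2) :
    1 ≤ Fintype.card ι * ε := by
  have hcover : Ico (0 : ℝ) 1 ≤ᵐ[volume] ⋃ i, Icc (e i - ε / 2) (e i + ε / 2) := by
    filter_upwards [h] with x hx hx01
    obtain ⟨i, hi⟩ := hx hx01
    obtain ⟨hi₁, hi₂⟩ := abs_le.mp hi
    exact mem_iUnion.2 ⟨i, by constructor <;> linarith⟩
  refine ENNReal.one_le_ofReal.mp ?_
  calc (1 : ENNReal) = volume (Ico (0 : ℝ) 1) := by simp [Real.volume_Ico]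
    _ ≤ volume (⋃ i, Icc (e i - ε / 2) (e i + ε / 2)) := measure_mono_ae hcover
    _ ≤ ∑ i, volume (Icc (e i - ε / 2) (e i + ε / 2)) := measure_iUnion_fintype_le _ _
    _ = ENNReal.ofReal (Fintype.card ι * ε) := by
      simp [Real.volume_Icc, ENNReal.ofReal_mul]

theorem volume_inter_Icc_le_of_subset_iUnion_Ico {S : Set ℝ} {l p w a b : ℝ} (hp : 0 < p)
    (hw : w ≤ p) (hS : S ⊆ ⋃ k : ℤ, Ico (l + k * p) (l + k * p + w)) (hab : b - a ≤ p) :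
    volume (S ∩ Icc a b) ≤ ENNReal.ofReal w := by
  set J := ⌊(a - l) / p⌋
  have hJ₁ : l + J * p ≤ a := by
    have := Int.floor_le ((a - l) / p)
    rw [le_div_iff₀ hp] at this
    linarith
  have hJ₂ : a < l + (J + 1) * p := by
    have := Int.lt_floor_add_one ((a - l) / p)
    rw [div_lt_iff₀ hp] at this
    linarith
  -- only the intervals with index `J` and `J + 1` can meet `[a, b]`
  have hcover : S ∩ Icc a b ⊆
      Icc a (l + J * p + w) ∪ Icc (l + (J + 1) * p) (min b (l + (J + 1) * p + w)) := by
    rintro x ⟨hxS, hxa, hxb⟩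
    obtain ⟨k, hk₁, hk₂⟩ := mem_iUnion.mp (hS hxS)
    have hJk : J < k + 1 := by
      have : (J : ℝ) * p < (k + 1) * p := by linarith
      exact_mod_cast lt_of_mul_lt_mul_right this hp.le
    have hkJ : k < J + 2 := by
      have : (k : ℝ) * p < (J + 2) * p := by linarith
      exact_mod_cast lt_of_mul_lt_mul_right this hp.le
    obtain rfl | rfl : k = J ∨ k = J + 1 := by omega
    · exact Or.inl ⟨hxa, hk₂.le⟩
    · push_cast at hk₁ hk₂
      exact Or.inr ⟨hk₁, le_min hxb hk₂.le⟩
  calc volume (S ∩ Icc a b)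
      ≤ volume (Icc a (l + J * p + w)) +
          volume (Icc (l + (J + 1) * p) (min b (l + (J + 1) * p + w))) :=
        (measure_mono hcover).trans (measure_union_le _ _)
    _ = ENNReal.ofReal (l + J * p + w - a) +
          ENNReal.ofReal (min b (l + (J + 1) * p + w) - (l + (J + 1) * p)) := by
        rw [Real.volume_Icc, Real.volume_Icc]
    _ ≤ ENNReal.ofReal w := by
        have h₁ := min_le_left b (l + (J + 1) * p + w)
        have h₂ := min_le_right b (l + (J + 1) * p + w)
        exact ENNReal.ofReal_add_ofReal_le (by linarith) (by linarith) (by linarith)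

theorem setLIntegral_measure_near_le (ν : Measure ℝ) [IsProbabilityMeasure ν] (A : Set ℝ)
    {r : ℝ} {C : ENNReal} (hC : ∀ z, volume (A ∩ Icc (z - r) (z + r)) ≤ C) :
    ∫⁻ x in A, ν {z | |z - x| ≤ r} ≤ C := by
  set D : Set (ℝ × ℝ) := {p | |p.2 - p.1| ≤ r}
  have hD : MeasurableSet D := measurableSet_le (by fun_prop) measurable_const
  calc ∫⁻ x in A, ν {z | |z - x| ≤ r} = (volume.restrict A).prod ν D :=
        (Measure.prod_apply hD).symm
    _ = ∫⁻ z, volume.restrict A {x | |z - x| ≤ r} ∂ν := Measure.prod_apply_symm hD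
    _ ≤ ∫⁻ _, C ∂ν := lintegral_mono fun z => ?_
    _ = C := by simp
  have hball : {x : ℝ | |z - x| ≤ r} = Icc (z - r) (z + r) := by
    ext x
    simp only [mem_ofPred, mem_Icc, abs_sub_le_iff]
    constructor <;> rintro ⟨h₁, h₂⟩ <;> constructor <;> linarith
  rw [hball, Measure.restrict_apply measurableSet_Icc, inter_comm]
  exact hC z

namespace Strategy

variable {N Y : ℕ} (φ : Strategy N Y) {x : ℝ} {y : Fin Y} {B : ℕ → Bool}

theorem resps_eq_of_forall
    (hB : ∀ k (hk : k < N), B k = decide (φ.query ⟨k, hk⟩ (fun i : Fin k => B i) y ≤ x)) :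
    ∀ k ≤ N, φ.resps x y k = fun i : Fin k => B i := by
  intro k hk
  induction k with
  | zero => exact funext fun i => i.elim0
  | succ k ih =>
    funext i
    simp only [resps]
    by_cases hi : (i : ℕ) < k
    · rw [dif_pos hi]
      exact congrFun (ih (by omega)) ⟨i, hi⟩
    · have hkN : k < N := by omega
      rw [dif_neg hi, dif_pos hkN, ih (by omega), show (i : ℕ) = k by omega, hB k hkN]

theorem queries_eq_of_forall
    (hB : ∀ k (hk : k < N), B k = decide (φ.query ⟨k, hk⟩ (fun i : Fin k => B i) y ≤ x)) :
    φ.queries x y = fun k => φ.query k (fun i => B i) y :=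
  funext fun k => by rw [queries, φ.resps_eq_of_forall hB k k.isLt.le]

theorem estim_eq_of_forall
    (hB : ∀ k (hk : k < N), B k = decide (φ.query ⟨k, hk⟩ (fun i : Fin k => B i) y ≤ x)) :
    φ.estim x y = φ.estimate (fun i => B i) y := by
  rw [estim, φ.resps_eq_of_forall hB N le_rfl]

end Strategy

theorem BAccurate.one_le_two_pow_mul {ε : ℝ} {N Y : ℕ} {φ : Strategy N Y}
    (hφ : BAccurate ε φ) (y : Fin Y) : 1 ≤ 2 ^ N * ε := by
  have h := one_le_card_mul_of_ae_near (fun r : Fin N → Bool => φ.estimate r y) (ε := ε) <| by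
    refine measure_mono_null (fun x hx => ?_) (hφ y)
    obtain ⟨hx01, hfar⟩ := Classical.not_imp.mp hx
    exact ⟨hx01, fun hclose => hfar ⟨_, hclose⟩⟩
  simpa [Fintype.card_fun] using h

theorem BAccurate.logb_le {ε : ℝ} {N Y : ℕ} {φ : Strategy N Y}
    (hφ : BAccurate ε φ) (y : Fin Y) : Real.logb 2 (1 / ε) ≤ N := by
  have h := hφ.one_le_two_pow_mul y
  have hε : 0 < ε := pos_of_mul_pos_right (one_pos.trans_le h) (by positivity)
  rw [Real.logb_le_iff_le_rpow one_lt_two (by positivity), Real.rpow_natCast, div_le_iff₀ hε]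
  exact h

namespace ReplicatedBisection

section Learner

variable (L : ℕ)

noncomputable def probe (j c s : ℕ) : ℝ := ((j : ℝ) + (2 * c + 1) / 2 ^ (s + 1)) / L

/-- Query `k < L - 1` asks for `(k + 1) / L`; query `L - 1 + s * L + i` (`i < L`) probes block `i`
at the midpoint of its `cells s`-th dyadic cell of level `s`. -/
noncomputable def query (cells : ℕ → ℕ) (k : ℕ) : ℝ :=
  if k < L - 1 then (k + 1 : ℝ) / L
  else probe L ((k - (L - 1)) % L) (cells ((k - (L - 1)) / L)) ((k - (L - 1)) / L)

def block (g : ℕ → Bool) : ℕ := ((Finset.range (L - 1)).filter fun i => g i).card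

def cell (g : ℕ → Bool) : ℕ → ℕ
  | 0 => 0
  | s + 1 => 2 * cell g s + (g (L - 1 + s * L + block L g)).toNat

variable {L}

theorem probe_mem (hL : 0 < L) {j c s : ℕ} (hj : j < L) (hc : c < 2 ^ s) :
    probe L j c s ∈ Ico (0 : ℝ) 1 := by
  have hjL : (j : ℝ) + 1 ≤ L := by exact_mod_cast hj
  have hc' : (c : ℝ) + 1 ≤ 2 ^ s := by exact_mod_cast hc
  have hfrac : (2 * c + 1 : ℝ) / 2 ^ (s + 1) < 1 := by
    rw [div_lt_one (by positivity), pow_succ]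
    linarith
  refine ⟨by unfold probe; positivity, ?_⟩
  rw [probe, div_lt_one (by exact_mod_cast hL)]
  linarith

theorem query_mem (hL : 0 < L) {cells : ℕ → ℕ} (hcells : ∀ s, cells s < 2 ^ s) (k : ℕ) :
    query L cells k ∈ Ico (0 : ℝ) 1 := by
  unfold query
  split_ifs with hk
  · have hkL : (k : ℝ) + 1 < L := by exact_mod_cast (by omega : k + 1 < L)
    exact ⟨by positivity, (div_lt_one (by positivity)).mpr hkL⟩
  · exact probe_mem hL (Nat.mod_lt _ hL) (hcells _)

theorem query_of_lt {cells : ℕ → ℕ} {k : ℕ} (hk : k < L - 1) :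
    query L cells k = (k + 1) / L :=
  if_pos hk

theorem query_round {cells : ℕ → ℕ} {j : ℕ} (hj : j < L) (s : ℕ) :
    query L cells (L - 1 + s * L + j) = probe L j (cells s) s := by
  have hk : L - 1 + s * L + j - (L - 1) = j + L * s := by rw [Nat.mul_comm]; omega
  rw [query, if_neg (by omega), hk, Nat.add_mul_div_left _ _ (by omega), Nat.div_eq_of_lt hj,
    Nat.add_mul_mod_self_left, Nat.mod_eq_of_lt hj, zero_add]

theorem query_congr {cells cells' : ℕ → ℕ} {k : ℕ}
    (h : ∀ s, L - 1 + s * L ≤ k → cells s = cells' s) :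
    query L cells k = query L cells' k := by
  unfold query
  split_ifs with hk
  · rfl
  · rw [h _ (by have := Nat.div_mul_le_self (k - (L - 1)) L; omega)]

theorem probe_le_iff (hL : 0 < L) {j c s : ℕ} {x : ℝ} :
    probe L j c s ≤ x ↔ (2 * c + 1 : ℝ) ≤ (x * L - j) * 2 ^ (s + 1) := by
  rw [probe, div_le_iff₀ (by exact_mod_cast hL), ← le_sub_iff_add_le',
    div_le_iff₀ (by positivity)]

theorem block_lt (hL : 0 < L) (g : ℕ → Bool) : block L g < L :=
  (Finset.card_filter_le _ _).trans_lt (by simp; omega)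

theorem cell_lt (g : ℕ → Bool) (s : ℕ) : cell L g s < 2 ^ s := by
  induction s with
  | zero => simp [cell]
  | succ s ih =>
    have := Bool.toNat_le (g (L - 1 + s * L + block L g))
    rw [cell, pow_succ]
    omega

theorem block_congr {g g' : ℕ → Bool} (h : ∀ i < L - 1, g i = g' i) :
    block L g = block L g' := by
  unfold block
  congr 1
  exact Finset.filter_congr fun i hi => by rw [h i (Finset.mem_range.mp hi)]

theorem cell_congr (hL : 0 < L) {g g' : ℕ → Bool} {s : ℕ}
    (h : ∀ i < L - 1 + s * L, g i = g' i) : cell L g s = cell L g' s := by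
  induction s with
  | zero => rfl
  | succ s ih =>
    have hblock : block L g = block L g' := block_congr fun i hi => h i (by nlinarith)
    have hlt := block_lt hL g
    rw [cell, cell, ih fun i hi => h i (by nlinarith), hblock,
      h _ (by rw [← hblock]; nlinarith)]

end Learner

section Responses

variable {L : ℕ} {x : ℝ}

/-- The level-`s` dyadic cell of the position of `x` inside its block `⌊x * L⌋₊`. -/
noncomputable def trueCell (L : ℕ) (x : ℝ) (s : ℕ) : ℕ := ⌊Int.fract (x * L) * 2 ^ s⌋₊

noncomputable def response (L : ℕ) (x : ℝ) (k : ℕ) : Bool :=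
  decide (query L (trueCell L x) k ≤ x)

theorem trueCell_zero : trueCell L x 0 = 0 :=
  Nat.floor_eq_zero.mpr (by simpa using Int.fract_lt_one _)

theorem trueCell_succ (s : ℕ) :
    trueCell L x (s + 1) = 2 * trueCell L x s +
      (decide ((2 * trueCell L x s + 1 : ℝ) ≤ Int.fract (x * L) * 2 ^ (s + 1))).toNat := by
  have h : Int.fract (x * L) * 2 ^ (s + 1) = 2 * (Int.fract (x * L) * 2 ^ s) := by ring
  rw [trueCell, trueCell, h]
  exact Nat.floor_two_mul (mul_nonneg (Int.fract_nonneg _) (by positivity))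

theorem trueCell_lt (m : ℕ) : trueCell L x m < 2 ^ m := by
  rw [trueCell, Nat.floor_lt (mul_nonneg (Int.fract_nonneg _) (by positivity))]
  push_cast
  exact mul_lt_of_lt_one_left (by positivity) (Int.fract_lt_one _)

theorem trueCell_eq_div {s m : ℕ} (hs : s ≤ m) :
    trueCell L x s = trueCell L x m / 2 ^ (m - s) := by
  rw [trueCell, trueCell, ← Nat.floor_div_natCast]
  congr 1
  push_cast
  rw [eq_div_iff (by positivity), mul_assoc, ← pow_add, Nat.add_sub_cancel' hs]

theorem block_response (hL : 0 < L) (hx : x ∈ Ico (0 : ℝ) 1) :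
    block L (response L x) = ⌊x * L⌋₊ := by
  have hj := Nat.floor_mul_natCast_lt hL hx
  have hfilter : (Finset.range (L - 1)).filter (fun i => response L x i) =
      Finset.range ⌊x * L⌋₊ := by
    ext i
    simp only [Finset.mem_filter, Finset.mem_range, response, decide_eq_true_eq]
    constructor
    · rintro ⟨hi, hle⟩
      rw [query_of_lt hi, div_le_iff₀ (by exact_mod_cast hL)] at hle
      have : i + 1 ≤ ⌊x * L⌋₊ := Nat.le_floor (by exact_mod_cast hle)
      omega
    · intro hi
      refine ⟨by omega, ?_⟩
      rw [query_of_lt (by omega), div_le_iff₀ (by exact_mod_cast hL)]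
      exact_mod_cast (Nat.le_floor_iff (mul_nonneg hx.1 (Nat.cast_nonneg L))).mp hi
  rw [block, hfilter, Finset.card_range]

theorem cell_response (hL : 0 < L) (hx : x ∈ Ico (0 : ℝ) 1) (s : ℕ) :
    cell L (response L x) s = trueCell L x s := by
  induction s with
  | zero => exact trueCell_zero.symm
  | succ s ih =>
    have hxL := Nat.cast_floor_add_fract (mul_nonneg hx.1 (Nat.cast_nonneg L))
    rw [cell, ih, block_response hL hx, trueCell_succ, response,
      query_round (Nat.floor_mul_natCast_lt hL hx)]
    simp only [probe_le_iff hL, show x * L - ⌊x * L⌋₊ = Int.fract (x * L) by linarith]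

theorem abs_probe_trueCell_sub_le (hL : 0 < L) (hx : x ∈ Ico (0 : ℝ) 1) (m : ℕ) :
    |probe L ⌊x * L⌋₊ (trueCell L x m) m - x| ≤ 1 / (L * 2 ^ m) / 2 := by
  have hL' : (0 : ℝ) < L := by exact_mod_cast hL
  have hxL := Nat.cast_floor_add_fract (mul_nonneg hx.1 hL'.le)
  set u := Int.fract (x * L)
  set c := trueCell L x m
  set j := ⌊x * L⌋₊
  have hu := Int.fract_nonneg (x * L)
  have h₁ : (c : ℝ) ≤ u * 2 ^ m := Nat.floor_le (by positivity)
  have h₂ : u * 2 ^ m < c + 1 := Nat.lt_floor_add_one _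
  have hdiff : probe L j c m - x = (2 * c + 1 - 2 * (u * 2 ^ m)) / (L * 2 ^ m) / 2 := by
    rw [probe, show x = (j + u) / L by field_simp; linarith]
    field_simp
    ring
  rw [hdiff, abs_div, abs_div, abs_of_pos (by positivity : (0 : ℝ) < L * 2 ^ m), abs_two]
  gcongr
  exact abs_le.mpr ⟨by linarith, by linarith⟩

end Responses

section Realization

variable {L : ℕ} {x : ℝ}

noncomputable def strategy (L m : ℕ) (hL : 0 < L) : Strategy (L - 1 + m * L) 1 where
  query k h _ := query L (cell L (Function.extend Fin.val h fun _ => false)) k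
  estimate r _ :=
    probe L (block L (Function.extend Fin.val r fun _ => false))
      (cell L (Function.extend Fin.val r fun _ => false) m) m
  query_mem _ _ _ := query_mem hL (cell_lt _) _
  estimate_mem _ _ := probe_mem hL (block_lt hL _) (cell_lt _ _)

theorem extend_response_of_lt {k i : ℕ} (hi : i < k) :
    Function.extend Fin.val (fun i : Fin k => response L x i) (fun _ => false) i =
      response L x i :=
  Fin.val_injective.extend_apply _ _ ⟨i, hi⟩

theorem strategy_query_response {m : ℕ} (hL : 0 < L) (hx : x ∈ Ico (0 : ℝ) 1)
    (k : Fin (L - 1 + m * L)) (y : Fin 1) :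
    (strategy L m hL).query k (fun i => response L x i) y = query L (trueCell L x) k :=
  query_congr fun s hs => (cell_congr hL fun i hi => extend_response_of_lt (by omega)).trans
    (cell_response hL hx s)

theorem response_eq_decide_query {m : ℕ} (hL : 0 < L) (hx : x ∈ Ico (0 : ℝ) 1) (y : Fin 1)
    (k : ℕ) (hk : k < L - 1 + m * L) :
    response L x k =
      decide ((strategy L m hL).query ⟨k, hk⟩ (fun i : Fin k => response L x i) y ≤ x) := by
  rw [strategy_query_response hL hx]
  rfl

theorem strategy_queries {m : ℕ} (hL : 0 < L) (hx : x ∈ Ico (0 : ℝ) 1) (y : Fin 1) :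
    (strategy L m hL).queries x y = fun k : Fin _ => query L (trueCell L x) k := by
  rw [Strategy.queries_eq_of_forall _ (response_eq_decide_query hL hx y)]
  exact funext fun k => strategy_query_response hL hx k y

theorem strategy_estim {m : ℕ} (hL : 0 < L) (hx : x ∈ Ico (0 : ℝ) 1) (y : Fin 1) :
    (strategy L m hL).estim x y = probe L ⌊x * L⌋₊ (trueCell L x m) m := by
  rw [Strategy.estim_eq_of_forall _ (response_eq_decide_query hL hx y)]
  show probe L (block L _) (cell L _ m) m = _
  rw [block_congr fun i hi => extend_response_of_lt (by nlinarith),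
    cell_congr hL fun i hi => extend_response_of_lt hi, block_response hL hx, cell_response hL hx]

theorem bAccurate_strategy {m : ℕ} (hL : 0 < L) {ε : ℝ} (hε : 1 / (L * 2 ^ m) ≤ ε) :
    BAccurate ε (strategy L m hL) := fun y =>
  measure_mono_null (fun x ⟨hx, hfar⟩ => hfar <| by
    rw [strategy_estim hL hx y]
    linarith [abs_probe_trueCell_sub_le hL hx m]) measure_empty

end Realization

section Privacy

variable {L : ℕ} {x : ℝ}

def fiber (L m c : ℕ) : Set ℝ := {x | x ∈ Ico (0 : ℝ) 1 ∧ trueCell L x m = c}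

theorem measurableSet_fiber (m c : ℕ) : MeasurableSet (fiber L m c) :=
  measurableSet_Ico.inter <|
    ((measurable_fract.comp (measurable_id.mul_const _)).mul_const _).nat_floor
      (measurableSet_singleton c)

theorem Ico_eq_biUnion_fiber (m : ℕ) :
    Ico (0 : ℝ) 1 = ⋃ c ∈ Finset.range (2 ^ m), fiber L m c := by
  ext x
  simp only [mem_iUnion, Finset.mem_range, exists_prop]
  exact ⟨fun hx => ⟨_, trueCell_lt m, hx, rfl⟩, fun ⟨_, _, hx, _⟩ => hx⟩

theorem pairwiseDisjoint_fiber (m : ℕ) (s : Set ℕ) : s.PairwiseDisjoint (fiber L m) :=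
  fun _ _ _ _ hab => disjoint_left.mpr fun _ ha hb => hab (ha.2.symm.trans hb.2)

theorem fiber_subset_iUnion_Ico (hL : 0 < L) (m c : ℕ) :
    fiber L m c ⊆ ⋃ k : ℤ, Ico (c / (L * 2 ^ m) + k * (1 / L))
      (c / (L * 2 ^ m) + k * (1 / L) + 1 / (L * 2 ^ m)) := by
  rintro x ⟨hx, rfl⟩
  have hL' : (0 : ℝ) < L := by exact_mod_cast hL
  have hxL := Nat.cast_floor_add_fract (mul_nonneg hx.1 hL'.le)
  set u := Int.fract (x * L)
  set c := trueCell L x m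
  set j := ⌊x * L⌋₊
  have hu := Int.fract_nonneg (x * L)
  have h₁ : (c : ℝ) ≤ u * 2 ^ m := Nat.floor_le (by positivity)
  have h₂ : u * 2 ^ m < c + 1 := Nat.lt_floor_add_one _
  have hx' : x = (j + u) / L := by field_simp; linarith
  refine mem_iUnion.mpr ⟨j, ?_, ?_⟩ <;> push_cast <;> rw [hx'] <;> field_simp <;> linarith

theorem strategy_queries_of_mem_fiber {m c : ℕ} (hL : 0 < L) (hx : x ∈ fiber L m c)
    (y : Fin 1) :
    (strategy L m hL).queries x y = fun k : Fin _ => query L (fun s => c / 2 ^ (m - s)) k := by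
  rw [strategy_queries hL hx.1]
  refine funext fun k => query_congr fun s hs => ?_
  have hsm : s < m := by
    by_contra! h
    have := Nat.mul_le_mul_right L h
    omega
  rw [trueCell_eq_div hsm.le, hx.2]

theorem bPrivate_strategy {m : ℕ} (hL : 0 < L) {ε δ : ℝ} (hε : 1 / (L * 2 ^ m) ≤ ε)
    (hδ : δ ≤ 1 / L) : BPrivate ε δ L (strategy L m hL) := by
  have hL' : (0 : ℝ) < L := by exact_mod_cast hL
  refine ⟨bAccurate_strategy hL hε, fun ψ hψ _ => ?_⟩
  rw [Fin.sum_univ_one, Nat.cast_one, one_mul, Ico_eq_biUnion_fiber m,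
    lintegral_biUnion_finset (pairwiseDisjoint_fiber m _) fun c _ => measurableSet_fiber m c]
  calc ∑ c ∈ Finset.range (2 ^ m),
        ∫⁻ x in fiber L m c, ψ ((strategy L m hL).queries x 0) {z | |z - x| ≤ δ / 2}
      ≤ ∑ _c ∈ Finset.range (2 ^ m), ENNReal.ofReal (1 / (L * 2 ^ m)) :=
        Finset.sum_le_sum fun c _ => ?_
    _ = (L : ENNReal)⁻¹ := by
        rw [Finset.sum_const, Finset.card_range, nsmul_eq_mul, ← ENNReal.ofReal_natCast,
          ← ENNReal.ofReal_mul (by positivity), ← ENNReal.ofReal_natCast,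
          ← ENNReal.ofReal_inv_of_pos hL']
        congr 1
        push_cast
        field_simp
  have := hψ fun k : Fin _ => query L (fun s => c / 2 ^ (m - s)) k
  rw [setLIntegral_congr_fun (measurableSet_fiber m c) fun x hx => by
    rw [strategy_queries_of_mem_fiber hL hx]]
  refine setLIntegral_measure_near_le _ _ fun z =>
    volume_inter_Icc_le_of_subset_iUnion_Ico (by positivity) ?_ (fiber_subset_iUnion_Ico hL m c)
      (by linarith)
  rw [one_div_le_one_div (by positivity) hL']
  exact le_mul_of_one_le_right hL'.le (one_le_pow₀ one_le_two)

end Privacy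

end ReplicatedBisection

theorem bayesian_query_complexity_general (ε δ : ℝ) (L : ℕ) (hL : 2 ≤ L)
    (hε : 0 < ε) (h1 : 2 * ε < δ) (h2 : δ ≤ 1 / (L : ℝ)) :
    ⌈Real.logb 2 (1 / ε)⌉ ≤ (NBstar ε δ L : ℤ) ∧
    (NBstar ε δ L : ℤ) ≤ (L : ℤ) * ⌈Real.logb 2 (1 / ((L : ℝ) * ε))⌉ + (L : ℤ) - 1 := by
  have hL' : (0 : ℝ) < L := by exact_mod_cast (by omega : 0 < L)
  set m := ⌈Real.logb 2 (1 / ((L : ℝ) * ε))⌉.toNat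
  have hLε : (L : ℝ) * ε ≤ 1 := by
    have := (le_div_iff₀ hL').mp h2
    nlinarith
  have hm : (m : ℤ) = ⌈Real.logb 2 (1 / ((L : ℝ) * ε))⌉ := Int.toNat_of_nonneg <|
    Int.ceil_nonneg <| Real.logb_nonneg one_lt_two <| one_le_one_div (by positivity) hLε
  have hlog : Real.logb 2 (1 / ((L : ℝ) * ε)) ≤ m := by exact_mod_cast hm ▸ Int.le_ceil _
  have hmem :
      L - 1 + m * L ∈ {N : ℕ | ∃ Y, 0 < Y ∧ ∃ φ : Strategy N Y, BPrivate ε δ L φ} :=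
    ⟨1, one_pos, _, ReplicatedBisection.bPrivate_strategy (by omega)
      (one_div_mul_two_pow_le_of_logb_le hL' hε hlog) h2⟩
  constructor
  · obtain ⟨Y, hY, φ, hφ⟩ := Nat.sInf_mem ⟨_, hmem⟩
    exact Int.ceil_le.mpr (by exact_mod_cast hφ.1.logb_le ⟨0, hY⟩)
  · have hle : NBstar ε δ L ≤ L - 1 + m * L := Nat.sInf_le hmem
    rw [← hm]
    zify [(by omega : 1 ≤ L)] at hle
    linarith

/-- with `v*` uniform on `[0,1)`,
`⌈log₂(1/ε)⌉ ≤ N_B*(ε,δ,L) ≤ L·⌈log₂(1/(Lε))⌉ + L − 1`. -/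
theorem bayesian_query_complexity (ε δ : ℝ) (L : ℕ) (hL : 2 ≤ L)
    (hε : 0 < ε) (hδ : 0 < δ) (h1 : 2 * ε < δ) (h2 : δ ≤ 1 / (L : ℝ)) :
    ⌈Real.logb 2 (1 / ε)⌉ ≤ (NBstar ε δ L : ℤ) ∧
    (NBstar ε δ L : ℤ) ≤ (L : ℤ) * ⌈Real.logb 2 (1 / ((L : ℝ) * ε))⌉ + (L : ℤ) - 1 :=
  bayesian_query_complexity_general ε δ L hL hε h1 h2
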